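/- arXiv:2006.13271 — 3 statements merged into one kernel-verified Lean document; each statement's English description precedes it below -/
import Mathlib

section
/- Every ℂ-linear derivation v : A₀ → A₀ satisfies v(z̄₁) ∈ (z̄₁, θ̄₁) and v(z̄₂) ∈ (z̄₂, θ̄₂), where (z̄ᵢ, θ̄ᵢ) denotes the ideal of A₀ generated by z̄ᵢ and θ̄ᵢ. -/
open MvPolynomial

noncomputable section

/-- The polynomial ring `ℂ[z₁,z₂,θ₁,θ₂]`:
variables `X 0 = z₁`, `X 1 = z₂`, `X 2 = θ₁`, `X 3 = θ₂`. -/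
abbrev P4 : Type := MvPolynomial (Fin 4) ℂ

/-- The ideal `(z₁z₂, z₁θ₂, z₂θ₁, θ₁θ₂, θ₁², θ₂²)` of relations of the NS node. -/
def nsIdeal0 : Ideal P4 :=
  Ideal.span {X 0 * X 1, X 0 * X 3, X 1 * X 2, X 2 * X 3, X 2 ^ 2, X 3 ^ 2}

/-- The local coordinate ring `A₀` of an NS node of a stable supercurve. -/
abbrev A0 : Type := P4 ⧸ nsIdeal0

/-- `z̄₁ ∈ A₀`. -/
def z1 : A0 := Ideal.Quotient.mk nsIdeal0 (X 0)
/-- `z̄₂ ∈ A₀`. -/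
def z2 : A0 := Ideal.Quotient.mk nsIdeal0 (X 1)
/-- `θ̄₁ ∈ A₀`. -/
def th1 : A0 := Ideal.Quotient.mk nsIdeal0 (X 2)
/-- `θ̄₂ ∈ A₀`. -/
def th2 : A0 := Ideal.Quotient.mk nsIdeal0 (X 3)

/-!
Applying `v` to `z̄₁ z̄₂ = 0` gives `z̄₂ · v(z̄₁) = -z̄₁ · v(z̄₂) ∈ (z̄₁, θ̄₁)`. Modulo `(z̄₁, θ̄₁)` the
ring `A₀` is `ℂ[z₁,z₂,θ₁,θ₂]` modulo the monomial ideal `(z₁, θ₁, θ₂²)`, whose generators do not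
involve `z₂`; reading membership off the supports shows that `z₂` is a nonzerodivisor there, hence
`v(z̄₁) ∈ (z̄₁, θ̄₁)`. The second claim is the same argument with the branches exchanged.
-/

namespace MvPolynomial

variable {σ R : Type*} [CommSemiring R]

theorem mem_of_X_mul_mem_span_monomial {S : Set (σ →₀ ℕ)} {i : σ} (hS : ∀ s ∈ S, s i = 0)
    {p : MvPolynomial σ R} (h : X i * p ∈ Ideal.span ((fun s => monomial s (1 : R)) '' S)) :
    p ∈ Ideal.span ((fun s => monomial s (1 : R)) '' S) := by
  rw [mem_ideal_span_monomial_image] at h ⊢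
  intro m hm
  obtain ⟨s, hs, hle⟩ := h _ (by rw [support_X_mul]; exact Finset.mem_map_of_mem _ hm)
  refine ⟨s, hs, fun k => ?_⟩
  rcases eq_or_ne k i with rfl | hk
  · simp [hS s hs]
  · simpa [Finsupp.single_apply, hk.symm] using hle k

end MvPolynomial

theorem Ideal.mem_map_mk_of_mul_mem {P : Type*} [CommRing P] {N J : Ideal P} (hNJ : N ≤ J)
    {y : P} (hy : ∀ p, y * p ∈ J → p ∈ J) {a : P ⧸ N}
    (h : Ideal.Quotient.mk N y * a ∈ J.map (Ideal.Quotient.mk N)) :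
    a ∈ J.map (Ideal.Quotient.mk N) := by
  obtain ⟨p, rfl⟩ := Ideal.Quotient.mk_surjective a
  rw [← map_mul, ← Ideal.mem_comap, Ideal.comap_map_mk hNJ] at h
  exact Ideal.mem_map_of_mem _ (hy p h)

theorem Derivation.apply_mem_of_mul_eq_zero {R A : Type*} [CommSemiring R] [CommRing A]
    [Algebra R A] (D : Derivation R A A) {x y : A} (hxy : x * y = 0) {I : Ideal A} (hx : x ∈ I)
    (hy : ∀ a, y * a ∈ I → a ∈ I) : D x ∈ I := by
  have hD : y * D x = -(x * D y) := by
    have := D.leibniz x y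
    rw [hxy, map_zero, smul_eq_mul, smul_eq_mul] at this
    linear_combination -this
  exact hy _ (hD ▸ I.neg_mem (I.mul_mem_right _ hx))

lemma nsIdeal0_le_span_X0_X2_X3sq : nsIdeal0 ≤ Ideal.span {X 0, X 2, X 3 ^ 2} := by
  set J : Ideal P4 := Ideal.span {X 0, X 2, X 3 ^ 2}
  have h0 : X 0 ∈ J := Ideal.subset_span (by simp)
  have h2 : X 2 ∈ J := Ideal.subset_span (by simp)
  have h3 : X 3 ^ 2 ∈ J := Ideal.subset_span (by simp)
  rw [nsIdeal0, Ideal.span_le]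
  simp only [Set.insert_subset_iff, Set.singleton_subset_iff, SetLike.mem_coe]
  exact ⟨J.mul_mem_right _ h0, J.mul_mem_right _ h0, J.mul_mem_left _ h2, J.mul_mem_right _ h2,
    J.pow_mem_of_mem h2 2 two_pos, h3⟩

lemma nsIdeal0_le_span_X1_X3_X2sq : nsIdeal0 ≤ Ideal.span {X 1, X 3, X 2 ^ 2} := by
  set J : Ideal P4 := Ideal.span {X 1, X 3, X 2 ^ 2}
  have h1 : X 1 ∈ J := Ideal.subset_span (by simp)
  have h3 : X 3 ∈ J := Ideal.subset_span (by simp)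
  have h2 : X 2 ^ 2 ∈ J := Ideal.subset_span (by simp)
  rw [nsIdeal0, Ideal.span_le]
  simp only [Set.insert_subset_iff, Set.singleton_subset_iff, SetLike.mem_coe]
  exact ⟨J.mul_mem_left _ h1, J.mul_mem_left _ h3, J.mul_mem_right _ h1, J.mul_mem_left _ h3,
    h2, J.pow_mem_of_mem h3 2 two_pos⟩

lemma mem_span_mk_X_of_mk_X_mul_mem {i j k l : Fin 4}
    (hN : nsIdeal0 ≤ Ideal.span {X i, X k, X l ^ 2}) (hl : X l ^ 2 ∈ nsIdeal0)
    (hji : j ≠ i) (hjk : j ≠ k) (hjl : j ≠ l) {a : A0}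
    (h : Ideal.Quotient.mk _ (X j) * a ∈
      Ideal.span {Ideal.Quotient.mk _ (X i), Ideal.Quotient.mk _ (X k)}) :
    a ∈ Ideal.span {Ideal.Quotient.mk _ (X i), Ideal.Quotient.mk _ (X k)} := by
  have hmap : Ideal.span {Ideal.Quotient.mk _ (X i), Ideal.Quotient.mk _ (X k)} =
      (Ideal.span {X i, X k, X l ^ 2} : Ideal P4).map (Ideal.Quotient.mk nsIdeal0) := by
    rw [Ideal.map_span, Set.image_insert_eq, Set.image_insert_eq, Set.image_singleton,
      Ideal.Quotient.eq_zero_iff_mem.2 hl, Set.pair_comm _ 0, Set.insert_comm _ 0,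
      Ideal.span_insert_zero]
  have hmonomial : (Ideal.span {X i, X k, X l ^ 2} : Ideal P4) =
      Ideal.span ((fun s => monomial s (1 : ℂ)) ''
        {Finsupp.single i 1, Finsupp.single k 1, Finsupp.single l 2}) := by
    simp only [Set.image_insert_eq, Set.image_singleton, ← X_pow_eq_monomial, pow_one]
  rw [hmap] at h ⊢
  refine Ideal.mem_map_mk_of_mul_mem hN (fun p hp => ?_) h
  rw [hmonomial] at hp ⊢
  exact mem_of_X_mul_mem_span_monomial (by simp [hji.symm, hjk.symm, hjl.symm]) hp

/-- every ℂ-linear derivation `v : A₀ → A₀` satisfies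
`v(z̄₁) ∈ (z̄₁, θ̄₁)` and `v(z̄₂) ∈ (z̄₂, θ̄₂)`. -/
theorem derivation_at_NS_node :
    ∀ v : Derivation ℂ A0 A0,
      v z1 ∈ Ideal.span {z1, th1} ∧ v z2 ∈ Ideal.span {z2, th2} := by
  intro v
  have hz : z1 * z2 = 0 := Ideal.Quotient.eq_zero_iff_mem.2 (Ideal.subset_span (by simp))
  constructor
  · refine v.apply_mem_of_mul_eq_zero hz (Ideal.subset_span (by simp)) fun _ => ?_
    exact mem_span_mk_X_of_mk_X_mul_mem nsIdeal0_le_span_X0_X2_X3sq (Ideal.subset_span (by simp))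
      (by decide) (by decide) (by decide)
  · refine v.apply_mem_of_mul_eq_zero (mul_comm z1 z2 ▸ hz) (Ideal.subset_span (by simp))
      fun _ => ?_
    exact mem_span_mk_X_of_mk_X_mul_mem nsIdeal0_le_span_X1_X3_X2sq (Ideal.subset_span (by simp))
      (by decide) (by decide) (by decide)

end
end

section
/- The ring A₀ is a free ℂ-vector space with basis consisting of: the element 1, the elements z̄₁ⁿ for n ≥ 1, the elements z̄₂ⁿ for n ≥ 1, the elements z̄₁ⁿθ̄₁ for n ≥ 0, and the elements z̄₂ⁿθ̄₂ for n ≥ 0. -/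
/-!
The relations of `A₀` are monomials, so `A₀` is the quotient of `ℂ[z₁,z₂,θ₁,θ₂]` by a monomial
ideal. A polynomial lies in a monomial ideal iff each of its monomials is divisible by a generator;
hence the images of the standard monomials (those divisible by no generator) form a basis of the
quotient. A monomial `z₁ᵃz₂ᵇθ₁ᶜθ₂ᵈ` is standard iff `c, d ≤ 1` and no two of `z₁`/`z₂`, `z₁`/`θ₂`,
`z₂`/`θ₁`, `θ₁`/`θ₂` occur together, and these are exactly the listed basis monomials.
-/

open MvPolynomial

noncomputable section

/-- Index type for the ℂ-basis: `1`; `z̄₁ⁿ (n ≥ 1)`; `z̄₂ⁿ (n ≥ 1)`;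
`z̄₁ⁿθ̄₁ (n ≥ 0)`; `z̄₂ⁿθ̄₂ (n ≥ 0)`. -/
abbrev BasisIdx : Type := Unit ⊕ ℕ ⊕ ℕ ⊕ ℕ ⊕ ℕ

/-- The claimed ℂ-basis of `A₀`. -/
def a0Basis : BasisIdx → A0
  | Sum.inl _ => 1
  | Sum.inr (Sum.inl n) => z1 ^ (n + 1)
  | Sum.inr (Sum.inr (Sum.inl n)) => z2 ^ (n + 1)
  | Sum.inr (Sum.inr (Sum.inr (Sum.inl n))) => z1 ^ n * th1
  | Sum.inr (Sum.inr (Sum.inr (Sum.inr n))) => z2 ^ n * th2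

namespace MvPolynomial

variable {σ R : Type*} [CommRing R]

def standardExponents (G : Set (σ →₀ ℕ)) : Set (σ →₀ ℕ) := {m | ∀ s ∈ G, ¬ s ≤ m}

variable {G : Set (σ →₀ ℕ)} {I : Ideal (MvPolynomial σ R)}

theorem linearIndependent_mk_monomial (hI : I = Ideal.span ((monomial · (1 : R)) '' G))
    {ι : Type*} {e : ι → σ →₀ ℕ} (he : Function.Injective e)
    (hstd : ∀ i, e i ∈ standardExponents G) :
    LinearIndependent R fun i => Ideal.Quotient.mk I (monomial (e i) 1) := by
  refine ((basisMonomials σ R).linearIndependent.comp e he).map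
    (f := (Ideal.Quotient.mkₐ R I).toLinearMap) (Submodule.disjoint_def.2 fun p hp hpI => ?_)
  have hsupp : ↑p.support ⊆ Set.range e := by
    rwa [← mem_restrictSupport_iff, restrictSupport_eq_span, ← Set.range_comp]
  rw [LinearMap.mem_ker, AlgHom.toLinearMap_apply, Ideal.Quotient.mkₐ_eq_mk,
    Ideal.Quotient.eq_zero_iff_mem, hI, mem_ideal_span_monomial_image] at hpI
  rw [← support_eq_empty, Finset.eq_empty_iff_forall_notMem]
  intro m hm
  obtain ⟨i, rfl⟩ := hsupp hm
  obtain ⟨s, hsG, hs⟩ := hpI _ hm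
  exact hstd i s hsG hs

theorem span_mk_monomial_eq_top (hI : I = Ideal.span ((monomial · (1 : R)) '' G))
    {ι : Type*} {e : ι → σ →₀ ℕ} (hstd : standardExponents G ⊆ Set.range e) :
    Submodule.span R (Set.range fun i => Ideal.Quotient.mk I (monomial (e i) 1)) = ⊤ := by
  rw [eq_top_iff]
  rintro x -
  obtain ⟨p, rfl⟩ := Ideal.Quotient.mk_surjective x
  induction p using induction_on' with
  | add p q hp hq => rw [map_add]; exact add_mem hp hq
  | monomial m a =>
    by_cases hm : m ∈ standardExponents G
    · obtain ⟨i, rfl⟩ := hstd hm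
      have hsmul : Ideal.Quotient.mk I (monomial (e i) a) =
          a • Ideal.Quotient.mk I (monomial (e i) 1) := by
        rw [← Ideal.Quotient.mkₐ_eq_mk R, ← map_smul, smul_monomial, smul_eq_mul, mul_one]
      rw [hsmul]
      exact Submodule.smul_mem _ a (Submodule.subset_span ⟨i, rfl⟩)
    · obtain ⟨s, hsG, hs⟩ : ∃ s ∈ G, s ≤ m := by simpa [standardExponents] using hm
      have : monomial m a ∈ I := by
        rw [hI, mem_ideal_span_monomial_image]
        intro m' hm'
        rw [Finset.mem_singleton.1 (support_monomial_subset hm')]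
        exact ⟨s, hsG, hs⟩
      rw [Ideal.Quotient.eq_zero_iff_mem.2 this]
      exact zero_mem _

end MvPolynomial

open Finsupp

def nsExponents : Set (Fin 4 →₀ ℕ) :=
  {single 0 1 + single 1 1, single 0 1 + single 3 1, single 1 1 + single 2 1,
    single 2 1 + single 3 1, single 2 2, single 3 2}

theorem nsIdeal0_eq_span_monomial :
    nsIdeal0 = Ideal.span ((monomial · (1 : ℂ)) '' nsExponents) := by
  simp [nsIdeal0, nsExponents, Set.image_insert_eq, monomial_single_add, ← X_pow_eq_monomial]

def a0Exponent : BasisIdx → Fin 4 →₀ ℕ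
  | Sum.inl _ => 0
  | Sum.inr (Sum.inl n) => single 0 (n + 1)
  | Sum.inr (Sum.inr (Sum.inl n)) => single 1 (n + 1)
  | Sum.inr (Sum.inr (Sum.inr (Sum.inl n))) => single 0 n + single 2 1
  | Sum.inr (Sum.inr (Sum.inr (Sum.inr n))) => single 1 n + single 3 1

theorem a0Basis_eq_mk_monomial (i : BasisIdx) :
    a0Basis i = Ideal.Quotient.mk nsIdeal0 (monomial (a0Exponent i) 1) := by
  rcases i with _ | n | n | n | n <;>
    simp [a0Basis, a0Exponent, z1, z2, th1, th2, monomial_single_add, ← X_pow_eq_monomial, pow_succ]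

def a0Index (m : Fin 4 →₀ ℕ) : BasisIdx :=
  if m 2 = 1 then .inr (.inr (.inr (.inl (m 0))))
  else if m 3 = 1 then .inr (.inr (.inr (.inr (m 1))))
  else if m 0 ≠ 0 then .inr (.inl (m 0 - 1))
  else if m 1 ≠ 0 then .inr (.inr (.inl (m 1 - 1)))
  else .inl ()

theorem a0Index_a0Exponent (i : BasisIdx) : a0Index (a0Exponent i) = i := by
  rcases i with _ | n | n | n | n <;> simp [a0Index, a0Exponent]

theorem mem_standardExponents_nsExponents {m : Fin 4 →₀ ℕ} :
    m ∈ MvPolynomial.standardExponents nsExponents ↔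
      (m 0 = 0 ∨ m 1 = 0) ∧ (m 0 = 0 ∨ m 3 = 0) ∧ (m 1 = 0 ∨ m 2 = 0) ∧ (m 2 = 0 ∨ m 3 = 0) ∧
        m 2 ≤ 1 ∧ m 3 ≤ 1 := by
  simp [MvPolynomial.standardExponents, nsExponents, Finsupp.le_def, Fin.forall_fin_succ]
  omega

theorem a0Exponent_mem_standardExponents (i : BasisIdx) :
    a0Exponent i ∈ MvPolynomial.standardExponents nsExponents := by
  rw [mem_standardExponents_nsExponents]
  rcases i with _ | n | n | n | n <;> simp [a0Exponent]

theorem a0Exponent_a0Index {m : Fin 4 →₀ ℕ}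
    (hm : m ∈ MvPolynomial.standardExponents nsExponents) : a0Exponent (a0Index m) = m := by
  rw [mem_standardExponents_nsExponents] at hm
  unfold a0Index
  split_ifs <;> ext i <;> fin_cases i <;>
    simp only [a0Exponent, Finsupp.coe_add, Pi.add_apply, Finsupp.coe_zero, Pi.zero_apply,
      Finsupp.single_apply, Fin.isValue, Fin.zero_eta, Fin.mk_one, Fin.reduceFinMk, Fin.reduceEq,
      ↓reduceIte] <;>
    omega

/-- `A₀` is a free ℂ-vector space with the indicated basis. -/
theorem A0_basis_over_C :
    LinearIndependent ℂ a0Basis ∧ Submodule.span ℂ (Set.range a0Basis) = ⊤ := by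
  rw [show a0Basis = fun i => Ideal.Quotient.mk nsIdeal0 (monomial (a0Exponent i) 1) from
    funext a0Basis_eq_mk_monomial]
  exact ⟨MvPolynomial.linearIndependent_mk_monomial nsIdeal0_eq_span_monomial
      (Function.LeftInverse.injective a0Index_a0Exponent) a0Exponent_mem_standardExponents,
    MvPolynomial.span_mk_monomial_eq_top nsIdeal0_eq_span_monomial
      fun _ hm => ⟨_, a0Exponent_a0Index hm⟩⟩

end
end

section
/- Let Ω be the A₀-module with generators dz₁, dz₂, dθ₁, dθ₂ and defining relations z₂·dz₁ + z₁·dz₂ = 0, θ₂·dz₁ + z₁·dθ₂ = 0, θ₁·dz₂ + z₂·dθ₁ = 0, θ₂·dθ₁ − θ₁·dθ₂ = 0. Let A₁ = ℂ[z₁,θ₁]/(θ₁²) and A₂ = ℂ[z₂,θ₂]/(θ₂²) with the quotient ring maps p₁ : A₀ → A₁ (sending z₂, θ₂ to 0) and p₂ : A₀ → A₂ (sending z₁, θ₁ to 0), and let φ : Ω → (A₁ ⊕ A₁) ⊕ (A₂ ⊕ A₂) be the well-defined A₀-linear map sending the class of a·dz₁ + b·dz₂ + c·dθ₁ + e·dθ₂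 to ((p₁(a), p₁(c)), (p₂(b), p₂(e))). Then the kernel of φ is a four-dimensional ℂ-vector space with basis the classes of z₁·dz₂, z₁·dθ₂, z₂·dθ₁, θ₁·dθ₂. -/
open MvPolynomial

noncomputable section

set_option synthInstance.maxHeartbeats 400000
set_option maxHeartbeats 1000000

/-- The standard generators of the free module `A₀⁴`:
`dd 0 = dz₁`, `dd 1 = dz₂`, `dd 2 = dθ₁`, `dd 3 = dθ₂`. -/
def dd (i : Fin 4) : Fin 4 → A0 := Pi.single i 1

/-- The relations of the module `Ω` of super Kähler differentials of `A₀`: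
`z₂·dz₁ + z₁·dz₂ = 0`, `θ₂·dz₁ + z₁·dθ₂ = 0`, `θ₁·dz₂ + z₂·dθ₁ = 0`,
`θ₂·dθ₁ − θ₁·dθ₂ = 0`. -/
def omegaRels0 : Set (Fin 4 → A0) :=
  { z2 • dd 0 + z1 • dd 1,
    th2 • dd 0 + z1 • dd 3,
    th1 • dd 1 + z2 • dd 2,
    th2 • dd 2 - th1 • dd 3 }

/-- The submodule of relations of `Ω`. -/
def omegaRelMod0 : Submodule A0 (Fin 4 → A0) := Submodule.span A0 omegaRels0

/-- The module `Ω` of super Kähler differentials of `A₀`. -/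
abbrev Omega0 : Type := (Fin 4 → A0) ⧸ omegaRelMod0

/-- The ideal `(z̄₂, θ̄₂)` cutting out the first branch. -/
def branchIdeal1 : Ideal A0 := Ideal.span {z2, th2}
/-- The ideal `(z̄₁, θ̄₁)` cutting out the second branch. -/
def branchIdeal2 : Ideal A0 := Ideal.span {z1, th1}

/-- The coordinate ring `A₁ ≅ ℂ[z₁,θ₁]/(θ₁²)` of the first branch, with quotient map
`p₁ : A₀ → A₁` sending `z₂, θ₂` to `0`. -/
abbrev A1 : Type := A0 ⧸ branchIdeal1
/-- The coordinate ring `A₂ ≅ ℂ[z₂,θ₂]/(θ₂²)` of the second branch, with quotient map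
`p₂ : A₀ → A₂` sending `z₁, θ₁` to `0`. -/
abbrev A2 : Type := A0 ⧸ branchIdeal2

/-- The classes of `z₁·dz₂`, `z₁·dθ₂`, `z₂·dθ₁`, `θ₁·dθ₂` in `Ω`. -/
def kfam : Fin 4 → Omega0 :=
  ![Submodule.Quotient.mk (z1 • dd 1),
    Submodule.Quotient.mk (z1 • dd 3),
    Submodule.Quotient.mk (z2 • dd 2),
    Submodule.Quotient.mk (th1 • dd 3)]

/-!
An element of the kernel of `φ` is the class of `a·dz₁ + b·dz₂ + c·dθ₁ + e·dθ₂` with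
`a, c ∈ (z₂, θ₂)` and `b, e ∈ (z₁, θ₁)`; by the defining relations, the product of each generator
of these ideals with the matching `d`-generator is `±` one of the four classes, so they generate
the kernel over `A₀`. The same relations exhibit each class as a multiple both of an element of
`(z₁, θ₁)` and of an element of `(z₂, θ₂)`. Since `(z₁, θ₁)·(z₂, θ₂) = 0` in `A₀`, the maximal ideal
`𝔪 = (z₁, θ₁) + (z₂, θ₂)` kills the four classes, and as `A₀ = ℂ + 𝔪` their `A₀`-span is their
`ℂ`-span.

A vanishing `ℂ`-combination of the classes lifts to an `A₀`-combination of the four defining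
relations; comparing the linear terms in `z₁, z₂, θ₁, θ₂` of its coordinates forces all
coefficients to vanish.
-/

namespace Submodule

variable {R M : Type*} [CommSemiring R] [AddCommMonoid M] [Module R M]

theorem restrictScalars_span_of_forall_smul_eq {A : Type*} [Semiring A] [Algebra R A]
    [Module A M] [IsScalarTower R A M] {s : Set M}
    (h : ∀ a : A, ∃ c : R, ∀ x ∈ s, a • x = c • x) :
    (span A s).restrictScalars R = span R s := by
  refine (span_le_restrictScalars R A s).antisymm' fun y hy => ?_
  refine span_induction subset_span (zero_mem _) (fun _ _ _ _ => add_mem) (fun a y _ hy => ?_) hy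
  obtain ⟨c, hc⟩ := h a
  refine span_induction (fun x hx => ?_) (by simp) (fun _ _ _ _ h₁ h₂ => ?_)
    (fun r x _ hx => ?_) hy
  · rw [hc x hx]; exact smul_mem _ c (subset_span hx)
  · rw [smul_add]; exact add_mem h₁ h₂
  · rw [smul_comm]; exact smul_mem _ r hx

theorem sup_smul_inf_smul_top_eq_bot {I J : Ideal R} (hIJ : I * J = ⊥) :
    (I ⊔ J) • (I • ⊤ ⊓ J • ⊤ : Submodule R M) = ⊥ := by
  refine eq_bot_iff.mpr ?_
  rw [sup_smul]
  refine sup_le ((smul_mono_right I inf_le_right).trans ?_)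
    ((smul_mono_right J inf_le_left).trans ?_)
  · rw [← Submodule.mul_smul, hIJ, bot_smul]
  · rw [← Submodule.mul_smul, mul_comm, hIJ, bot_smul]

end Submodule

theorem z2_mem_branchIdeal1 : z2 ∈ branchIdeal1 := Ideal.subset_span (by simp)
theorem th2_mem_branchIdeal1 : th2 ∈ branchIdeal1 := Ideal.subset_span (by simp)
theorem z1_mem_branchIdeal2 : z1 ∈ branchIdeal2 := Ideal.subset_span (by simp)
theorem th1_mem_branchIdeal2 : th1 ∈ branchIdeal2 := Ideal.subset_span (by simp)

theorem branchIdeal1_mul_branchIdeal2 : branchIdeal1 * branchIdeal2 = ⊥ := by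
  rw [branchIdeal1, branchIdeal2, Ideal.span_mul_span, Ideal.span_eq_bot]
  rintro _ ⟨x, rfl | rfl, y, rfl | rfl, rfl⟩ <;>
    exact Ideal.Quotient.eq_zero_iff_mem.mpr (Ideal.subset_span (by simp [mul_comm]))

theorem exists_sub_algebraMap_mem_sup (a : A0) :
    ∃ c : ℂ, a - algebraMap ℂ A0 c ∈ branchIdeal1 ⊔ branchIdeal2 := by
  have hX (i : Fin 4) : Ideal.Quotient.mk nsIdeal0 (X i) ∈ branchIdeal1 ⊔ branchIdeal2 := by
    fin_cases i
    · exact Ideal.mem_sup_right z1_mem_branchIdeal2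
    · exact Ideal.mem_sup_left z2_mem_branchIdeal1
    · exact Ideal.mem_sup_right th1_mem_branchIdeal2
    · exact Ideal.mem_sup_left th2_mem_branchIdeal1
  obtain ⟨p, rfl⟩ := Ideal.Quotient.mk_surjective a
  induction p using MvPolynomial.induction_on with
  | C r => exact ⟨r, by
    rw [← MvPolynomial.algebraMap_eq, Ideal.Quotient.mk_algebraMap, sub_self]
    exact zero_mem _⟩
  | add p q hp hq =>
    obtain ⟨c, hc⟩ := hp
    obtain ⟨d, hd⟩ := hq
    exact ⟨c + d, by simpa [add_sub_add_comm] using add_mem hc hd⟩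
  | mul_X p i _ => exact ⟨0, by simpa using Ideal.mul_mem_left _ _ (hX i)⟩

def dGen (k : Fin 4) : Omega0 := Submodule.Quotient.mk (dd k)

theorem mk_eq_sum_smul_dGen (v : Fin 4 → A0) :
    (Submodule.Quotient.mk v : Omega0) = ∑ k, v k • dGen k := by
  calc (Submodule.Quotient.mk v : Omega0) = omegaRelMod0.mkQ (∑ k, v k • dd k) :=
        congrArg _ (pi_eq_sum_univ' v)
    _ = ∑ k, v k • dGen k := by simp [dGen]

theorem mk_eq_zero_of_mem_omegaRels0 {r : Fin 4 → A0} (hr : r ∈ omegaRels0) :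
    (Submodule.Quotient.mk r : Omega0) = 0 :=
  (Submodule.Quotient.mk_eq_zero _).mpr (Submodule.subset_span hr)

theorem z2_smul_dGen_zero : z2 • dGen 0 = -kfam 0 :=
  eq_neg_of_add_eq_zero_left (mk_eq_zero_of_mem_omegaRels0 (by simp [omegaRels0]))

theorem th2_smul_dGen_zero : th2 • dGen 0 = -kfam 1 :=
  eq_neg_of_add_eq_zero_left (mk_eq_zero_of_mem_omegaRels0 (by simp [omegaRels0]))

theorem th1_smul_dGen_one : th1 • dGen 1 = -kfam 2 :=
  eq_neg_of_add_eq_zero_left (mk_eq_zero_of_mem_omegaRels0 (by simp [omegaRels0]))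

theorem th2_smul_dGen_two : th2 • dGen 2 = kfam 3 :=
  sub_eq_zero.mp (mk_eq_zero_of_mem_omegaRels0 (by simp [omegaRels0]))

theorem kfam_mem_smul_top_inf_smul_top (i : Fin 4) :
    kfam i ∈ branchIdeal1 • (⊤ : Submodule A0 Omega0) ⊓ branchIdeal2 • ⊤ := by
  have h1 {x : A0} (hx : x ∈ branchIdeal1) (ω : Omega0) :
      x • ω ∈ branchIdeal1 • (⊤ : Submodule A0 Omega0) :=
    Submodule.smul_mem_smul hx Submodule.mem_top
  have h2 {x : A0} (hx : x ∈ branchIdeal2) (ω : Omega0) :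
      x • ω ∈ branchIdeal2 • (⊤ : Submodule A0 Omega0) :=
    Submodule.smul_mem_smul hx Submodule.mem_top
  fin_cases i
  · exact ⟨neg_mem_iff.mp (z2_smul_dGen_zero ▸ h1 z2_mem_branchIdeal1 _),
      h2 z1_mem_branchIdeal2 (dGen 1)⟩
  · exact ⟨neg_mem_iff.mp (th2_smul_dGen_zero ▸ h1 th2_mem_branchIdeal1 _),
      h2 z1_mem_branchIdeal2 (dGen 3)⟩
  · exact ⟨h1 z2_mem_branchIdeal1 (dGen 2),
      neg_mem_iff.mp (th1_smul_dGen_one ▸ h2 th1_mem_branchIdeal2 _)⟩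
  · exact ⟨th2_smul_dGen_two ▸ h1 th2_mem_branchIdeal1 _, h2 th1_mem_branchIdeal2 (dGen 3)⟩

theorem exists_smul_kfam_eq (a : A0) : ∃ c : ℂ, ∀ x ∈ Set.range kfam, a • x = c • x := by
  obtain ⟨c, hc⟩ := exists_sub_algebraMap_mem_sup a
  refine ⟨c, ?_⟩
  rintro _ ⟨i, rfl⟩
  have h := Submodule.smul_mem_smul hc (kfam_mem_smul_top_inf_smul_top i)
  rw [Submodule.sup_smul_inf_smul_top_eq_bot branchIdeal1_mul_branchIdeal2,
    Submodule.mem_bot, sub_smul, algebraMap_smul, sub_eq_zero] at h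
  exact h

def restrictToBranches : Omega0 →ₗ[A0] (A1 × A1) × (A2 × A2) :=
  omegaRelMod0.liftQ
    (((branchIdeal1.mkQ ∘ₗ .proj 0).prod (branchIdeal1.mkQ ∘ₗ .proj 2)).prod
      ((branchIdeal2.mkQ ∘ₗ .proj 1).prod (branchIdeal2.mkQ ∘ₗ .proj 3)))
    (Submodule.span_le.mpr <| by
      simp [omegaRels0, Set.insert_subset_iff, dd, Ideal.Quotient.eq_zero_iff_mem,
        z1_mem_branchIdeal2, z2_mem_branchIdeal1, th1_mem_branchIdeal2, th2_mem_branchIdeal1])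

theorem restrictToBranches_mk (v : Fin 4 → A0) :
    restrictToBranches (Submodule.Quotient.mk v) =
      ((Ideal.Quotient.mk branchIdeal1 (v 0), Ideal.Quotient.mk branchIdeal1 (v 2)),
       (Ideal.Quotient.mk branchIdeal2 (v 1), Ideal.Quotient.mk branchIdeal2 (v 3))) :=
  rfl

theorem restrictToBranches_mk_eq_zero_iff (v : Fin 4 → A0) :
    restrictToBranches (Submodule.Quotient.mk v) = 0 ↔
      (v 0 ∈ branchIdeal1 ∧ v 2 ∈ branchIdeal1) ∧ v 1 ∈ branchIdeal2 ∧ v 3 ∈ branchIdeal2 := by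
  simp [restrictToBranches_mk, Prod.ext_iff, Ideal.Quotient.eq_zero_iff_mem]

theorem ker_restrictToBranches :
    LinearMap.ker restrictToBranches = Submodule.span A0 (Set.range kfam) := by
  set K := Submodule.span A0 (Set.range kfam)
  have hK (i : Fin 4) : kfam i ∈ K := Submodule.subset_span ⟨i, rfl⟩
  have hK' (i : Fin 4) : -kfam i ∈ K := neg_mem (hK i)
  have colon {x y : A0} {k : Fin 4} (hx : x • dGen k ∈ K) (hy : y • dGen k ∈ K) :
      Ideal.span {x, y} ≤ K.colon {dGen k} := by
    simpa [Ideal.span_le, Set.insert_subset_iff] using ⟨hx, hy⟩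
  refine le_antisymm (fun ω hω => ?_) (Submodule.span_le.mpr ?_)
  · obtain ⟨v, rfl⟩ := Submodule.Quotient.mk_surjective _ ω
    obtain ⟨⟨h0, h2⟩, h1, h3⟩ := (restrictToBranches_mk_eq_zero_iff v).mp hω
    have e0 := colon (z2_smul_dGen_zero ▸ hK' 0) (th2_smul_dGen_zero ▸ hK' 1) h0
    have e1 := colon (hK 0) (th1_smul_dGen_one ▸ hK' 2) h1
    have e2 := colon (hK 2) (th2_smul_dGen_two ▸ hK 3) h2
    have e3 := colon (hK 1) (hK 3) h3
    rw [Submodule.mem_colon_singleton] at e0 e1 e2 e3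
    rw [mk_eq_sum_smul_dGen, Fin.sum_univ_four]
    exact add_mem (add_mem (add_mem e0 e1) e2) e3
  · rintro _ ⟨i, rfl⟩
    fin_cases i <;> refine (restrictToBranches_mk_eq_zero_iff _).mpr ?_ <;>
      simp [dd, z1_mem_branchIdeal2, z2_mem_branchIdeal1, th1_mem_branchIdeal2]

open TrivSqZeroExt in
/-- Reduction modulo `𝔪²`, with `𝔪/𝔪²` identified with `ℂ⁴` via `z₁, z₂, θ₁, θ₂`. -/
def jet : A0 →ₐ[ℂ] TrivSqZeroExt ℂ (Fin 4 → ℂ) :=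
  Ideal.Quotient.liftₐ nsIdeal0 (aeval fun i => inr (Pi.single i 1)) fun _ hp =>
    RingHom.mem_ker.mp <| (Ideal.span_le (I := RingHom.ker _)).mpr
      (by simp [Set.insert_subset_iff, pow_two]) hp

theorem jet_mk_X (i : Fin 4) :
    jet (Ideal.Quotient.mk nsIdeal0 (X i)) = TrivSqZeroExt.inr (Pi.single i 1) :=
  aeval_X _ i

theorem exists_coeffs_of_mem_omegaRelMod0 {w : Fin 4 → A0} (hw : w ∈ omegaRelMod0) :
    ∃ a b c d : A0, w 0 = a * z2 + b * th2 ∧ w 1 = a * z1 + c * th1 ∧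
      w 2 = c * z2 + d * th2 ∧ w 3 = b * z1 - d * th1 := by
  simp only [omegaRelMod0, omegaRels0, Submodule.mem_span_insert,
    Submodule.mem_span_singleton] at hw
  obtain ⟨a, _, ⟨b, _, ⟨c, _, ⟨d, rfl⟩, rfl⟩, rfl⟩, rfl⟩ := hw
  refine ⟨a, b, c, d, ?_⟩
  simp [dd, sub_eq_add_neg]

theorem linearIndependent_kfam : LinearIndependent ℂ kfam := by
  rw [Fintype.linearIndependent_iff]
  intro g hg
  have hw : ∑ i, g i • kfam i = Submodule.Quotient.mk
      (g 0 • z1 • dd 1 + g 1 • z1 • dd 3 + g 2 • z2 • dd 2 + g 3 • th1 • dd 3) := by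
    simp [Fin.sum_univ_four, kfam]
  obtain ⟨a, b, c, d, h0, h1, h2, h3⟩ :=
    exists_coeffs_of_mem_omegaRelMod0 ((Submodule.Quotient.mk_eq_zero _).mp (hw ▸ hg))
  have coeff (k : Fin 4) {x y : A0} (h : x = y) : (jet x).snd k = (jet y).snd k := by rw [h]
  have ha := coeff 1 h0
  have hb := coeff 3 h0
  have hg0 := coeff 0 h1
  have hc := coeff 2 h1
  have hg2 := coeff 1 h2
  have hd := coeff 3 h2
  have hg1 := coeff 0 h3
  have hg3 := coeff 2 h3
  simp [dd, z1, z2, th1, th2, jet_mk_X] at ha hb hg0 hc hg2 hd hg1 hg3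
  intro i
  fin_cases i
  · exact hg0.trans ha.symm
  · exact hg1.trans hb.symm
  · exact hg2.trans hc.symm
  · simpa [← hd] using hg3

/-- the `A₀`-linear map `φ : Ω → (A₁ ⊕ A₁) ⊕ (A₂ ⊕ A₂)` sending the class
of `a·dz₁ + b·dz₂ + c·dθ₁ + e·dθ₂` to `((p₁ a, p₁ c), (p₂ b, p₂ e))` is well defined, and
its kernel is a four-dimensional ℂ-vector space with basis the classes of
`z₁·dz₂`, `z₁·dθ₂`, `z₂·dθ₁`, `θ₁·dθ₂`. -/
theorem kernel_of_branch_restriction :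
    ∃ φ : Omega0 →ₗ[A0] (A1 × A1) × (A2 × A2),
      (∀ v : Fin 4 → A0,
        φ (Submodule.Quotient.mk v) =
          ((Ideal.Quotient.mk branchIdeal1 (v 0), Ideal.Quotient.mk branchIdeal1 (v 2)),
           (Ideal.Quotient.mk branchIdeal2 (v 1), Ideal.Quotient.mk branchIdeal2 (v 3)))) ∧
      LinearIndependent ℂ kfam ∧
      Submodule.span ℂ (Set.range kfam) = (LinearMap.ker φ).restrictScalars ℂ := by
  refine ⟨restrictToBranches, restrictToBranches_mk, linearIndependent_kfam, ?_⟩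
  rw [ker_restrictToBranches,
    Submodule.restrictScalars_span_of_forall_smul_eq exists_smul_kfam_eq]

end
end
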